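/- For every positive integer n and every divisor d_1 of the square-free kernel γ(n), one has μ(d_1) ∑_{d | n, d ≠ d_1} μ(d) c_n(∑_{p | d_1} n/p − ∑_{p | d} n/p) = n − φ(n). -/

import Mathlib

open Polynomial Finset

/-- The Ramanujan sum `c_n(r) = ∑_{1 ≤ j ≤ n, gcd(j,n)=1} e^{2πijr/n}`. -/
noncomputable def ramanujanSum (n : ℕ) (r : ℤ) : ℂ :=
  ∑ j ∈ Finset.Icc 1 n, if Nat.gcd j n = 1 then
    Complex.exp (2 * (Real.pi : ℂ) * Complex.I * (j : ℂ) * (r : ℂ) / (n : ℂ)) else 0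

/-!
With `ψ` the standard additive character of `ℤ/n` and `s(d) = ∑_{p ∣ d} n/p`, we have
`c_n(r) = ∑_{j ∈ (ℤ/n)ˣ} ψ(jr)`. For fixed `j` the Möbius sum over `d ∣ n` factors as
`ψ(j s(d₁)) ∏_{p ∣ n} (1 - ψ(-j n/p))`; after multiplying by `μ(d₁)`, the prefactor
`μ(d₁) ψ(j s(d₁)) = ∏_{p ∣ d₁} (-ψ(j n/p))` turns the factors with `p ∣ d₁` into `1 - ψ(j n/p)`. The product `∏_{p ∣ n} (1 - ψ(± j n/p))` vanishes when
`gcd(j, n) > 1`, so the sum over units is the sum over all of `ℤ/n`; expanding the product, only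
the empty subset survives by orthogonality, because no nonempty signed sum `∑ ± n/p` is divisible
by `n` (look at the exact power of one of its primes). So the full sum over `d ∣ n` is `n`, and
the term `d = d₁` is `μ(d₁)² φ(n) = φ(n)`.
-/

open ArithmeticFunction
open scoped ArithmeticFunction.Moebius

namespace Nat

theorem squarefree_prod_primeFactors (n : ℕ) : Squarefree (∏ p ∈ n.primeFactors, p) :=
  radical_eq_prod_primeFactors ▸ UniqueFactorizationMonoid.squarefree_radical

theorem sum_divisors_moebius_mul_prod_primeFactors {R : Type*} [CommRing R] {n : ℕ} (hn : n ≠ 0)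
    (g : ℕ → R) :
    ∑ d ∈ n.divisors, (μ d : R) * ∏ p ∈ d.primeFactors, g p = ∏ p ∈ n.primeFactors, (1 - g p) := by
  set r := ∏ p ∈ n.primeFactors, p
  have hr : Squarefree r := squarefree_prod_primeFactors n
  calc ∑ d ∈ n.divisors, (μ d : R) * ∏ p ∈ d.primeFactors, g p
      = ∑ d ∈ r.divisors, (μ d : R) * ∏ p ∈ d.primeFactors, g p := by
        refine (sum_subset (divisors_subset_of_dvd hn (prod_primeFactors_dvd n))
          fun d hdn hdr => ?_).symm
        suffices ¬ Squarefree d by simp [moebius_eq_zero_of_not_squarefree this]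
        intro hd
        refine hdr (mem_divisors.2 ⟨?_, hr.ne_zero⟩)
        rw [← prod_primeFactors_of_squarefree hd]
        exact prod_dvd_prod_of_subset _ _ _ (primeFactors_mono (dvd_of_mem_divisors hdn) hn)
    _ = ∑ d ∈ r.divisors, (μ d : R) * prodPrimeFactors g d :=
        sum_congr rfl fun d hd => by
          rw [prodPrimeFactors_apply (f := g) (pos_of_mem_divisors hd).ne']
    _ = ∏ p ∈ n.primeFactors, (1 - g p) := by
        rw [← (IsMultiplicative.prodPrimeFactors g).prodPrimeFactors_one_sub_of_squarefree _ hr,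
          primeFactors_prod_primeFactors]
        refine prod_congr rfl fun p hp => ?_
        rw [prodPrimeFactors_apply (f := g) (prime_of_mem_primeFactors hp).ne_zero,
          (prime_of_mem_primeFactors hp).primeFactors, prod_singleton]

theorem pow_factorization_dvd_div_of_ne {n p q : ℕ} (hp : p.Prime) (hq : q.Prime) (hqn : q ∣ n)
    (hpq : p ≠ q) : p ^ n.factorization p ∣ n / q := by
  refine (Coprime.pow_left _ ((coprime_primes hp hq).2 hpq)).dvd_of_dvd_mul_right ?_
  rw [Nat.div_mul_cancel hqn]
  exact ordProj_dvd n p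

theorem not_pow_factorization_dvd_div {n p : ℕ} (hn : n ≠ 0) (hp : p.Prime) (hpn : p ∣ n) :
    ¬ p ^ n.factorization p ∣ n / p := fun h =>
  pow_succ_factorization_not_dvd hn hp <| by
    simpa [pow_succ, Nat.div_mul_cancel hpn] using Nat.mul_dvd_mul_right h p

end Nat

theorem Int.not_dvd_sum_mul_div_primeFactors {n : ℕ} (hn : n ≠ 0) {t : Finset ℕ}
    (ht : t ⊆ n.primeFactors) (ht₀ : t.Nonempty) {c : ℕ → ℤ} (hc : ∀ p ∈ t, IsUnit (c p)) :
    ¬ (n : ℤ) ∣ ∑ p ∈ t, c p * (n / p : ℕ) := by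
  obtain ⟨p, hp⟩ := ht₀
  have hpp := Nat.prime_of_mem_primeFactors (ht hp)
  have hother : ∀ q ∈ t.erase p, ((p ^ n.factorization p : ℕ) : ℤ) ∣ c q * (n / q : ℕ) := by
    intro q hq
    have hqn := ht (mem_of_mem_erase hq)
    exact (Int.natCast_dvd_natCast.2 <| Nat.pow_factorization_dvd_div_of_ne hpp
      (Nat.prime_of_mem_primeFactors hqn) (Nat.dvd_of_mem_primeFactors hqn)
      (ne_of_mem_erase hq).symm).mul_left _
  intro h
  have h' := (Int.natCast_dvd_natCast.2 (Nat.ordProj_dvd n p)).trans h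
  rw [← add_sum_erase t _ hp, dvd_add_left (dvd_sum hother), (hc p hp).dvd_mul_left,
    Int.natCast_dvd_natCast] at h'
  exact Nat.not_pow_factorization_dvd_div hn hpp (Nat.dvd_of_mem_primeFactors (ht hp)) h'

namespace AddChar

theorem map_sum_eq_prod {ι A M : Type*} [AddCommMonoid A] [CommMonoid M] (ψ : AddChar A M)
    (s : Finset ι) (a : ι → A) : ψ (∑ i ∈ s, a i) = ∏ i ∈ s, ψ (a i) := by
  induction s using Finset.cons_induction with
  | empty => simp
  | cons i s hi ih => rw [sum_cons, prod_cons, map_add_eq_mul, ih]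

section CommRing

variable {A R : Type*} [AddCommGroup A] [CommRing R] (ψ : AddChar A R)

theorem neg_map_mul_one_sub_map_neg (a : A) : -ψ a * (1 - ψ (-a)) = 1 - ψ a := by
  have h := ψ.map_add_eq_mul a (-a)
  rw [add_neg_cancel, map_zero_eq_one] at h
  linear_combination -h

theorem prod_neg_map_mul_prod_one_sub_map_neg {ι : Type*} [DecidableEq ι] {s t : Finset ι}
    (hst : s ⊆ t) (a : ι → A) :
    (∏ i ∈ s, -ψ (a i)) * ∏ i ∈ t, (1 - ψ (-a i)) =
      ∏ i ∈ t, (1 - ψ (if i ∈ s then a i else -a i)) := by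
  rw [← prod_sdiff hst, ← prod_sdiff hst (f := fun i => 1 - ψ (if i ∈ s then a i else -a i)),
    mul_left_comm, ← prod_mul_distrib]
  congr 1
  · exact prod_congr rfl fun i hi => by rw [if_neg (mem_sdiff.1 hi).2]
  · exact prod_congr rfl fun i hi => by rw [if_pos hi, neg_map_mul_one_sub_map_neg]

theorem moebius_mul_sum_divisors_moebius_mul_map_sub {n d₁ : ℕ} (hn : n ≠ 0) (hd₁ : d₁ ∣ n)
    (hsq : Squarefree d₁) (a : ℕ → A) :
    (μ d₁ : R) * ∑ d ∈ n.divisors,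
        (μ d : R) * ψ (∑ p ∈ d₁.primeFactors, a p - ∑ p ∈ d.primeFactors, a p) =
      ∏ p ∈ n.primeFactors, (1 - ψ (if p ∈ d₁.primeFactors then a p else -a p)) := by
  have hμ : (μ d₁ : R) = ∏ p ∈ d₁.primeFactors, (-1 : R) := by
    conv_lhs => rw [← Nat.prod_primeFactors_of_squarefree hsq]
    rw [isMultiplicative_moebius.map_prod_of_prime _ fun p hp => Nat.prime_of_mem_primeFactors hp]
    push_cast
    exact prod_congr rfl fun p hp => by
      rw [moebius_apply_prime (Nat.prime_of_mem_primeFactors hp), Int.cast_neg, Int.cast_one]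
  calc (μ d₁ : R) * ∑ d ∈ n.divisors,
        (μ d : R) * ψ (∑ p ∈ d₁.primeFactors, a p - ∑ p ∈ d.primeFactors, a p)
      = (μ d₁ : R) * ψ (∑ p ∈ d₁.primeFactors, a p) *
          ∑ d ∈ n.divisors, (μ d : R) * ∏ p ∈ d.primeFactors, ψ (-a p) := by
        rw [mul_assoc, mul_sum (a := ψ _)]
        congr 1
        refine sum_congr rfl fun d _ => ?_
        rw [sub_eq_add_neg, ← sum_neg_distrib, map_add_eq_mul, map_sum_eq_prod _ d.primeFactors]
        ring
    _ = (∏ p ∈ d₁.primeFactors, -ψ (a p)) * ∏ p ∈ n.primeFactors, (1 - ψ (-a p)) := by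
        rw [Nat.sum_divisors_moebius_mul_prod_primeFactors hn, hμ, map_sum_eq_prod,
          ← prod_mul_distrib]
        simp only [neg_one_mul]
    _ = _ := ψ.prod_neg_map_mul_prod_one_sub_map_neg (Nat.primeFactors_mono hd₁ hn) a

end CommRing

theorem sum_prod_one_sub_map_mul {R R' : Type*} [CommRing R] [Fintype R] [CommRing R']
    [IsDomain R'] {ψ : AddChar R R'} (hψ : ψ.IsPrimitive) {ι : Type*} [DecidableEq ι]
    (s : Finset ι) (w : ι → R) (hw : ∀ t ⊆ s, t.Nonempty → ∑ i ∈ t, w i ≠ 0) :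
    ∑ x : R, ∏ i ∈ s, (1 - ψ (x * w i)) = Fintype.card R := by
  classical
  have expand (x : R) : ∏ i ∈ s, (1 - ψ (x * w i)) =
      ∑ t ∈ s.powerset, (-1) ^ t.card * ψ (x * ∑ i ∈ t, w i) := by
    simp_rw [sub_eq_neg_add, prod_add, prod_const_one, mul_one, mul_sum, map_sum_eq_prod,
      prod_neg]
  simp_rw [expand]
  rw [sum_comm]
  simp_rw [← mul_sum, sum_mulShift _ hψ]
  rw [sum_eq_single ∅ (fun t ht ht₀ => by
    rw [if_neg (hw t (mem_powerset.1 ht) (nonempty_iff_ne_empty.2 ht₀)), Nat.cast_zero, mul_zero])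
    (fun h => absurd (empty_mem_powerset s) h)]
  simp

end AddChar

namespace ZMod

theorem sum_Icc_one_natCast {M : Type*} [AddCommMonoid M] (n : ℕ) [NeZero n] (f : ZMod n → M) :
    ∑ j ∈ Icc 1 n, f j = ∑ x, f x := by
  refine sum_nbij' Nat.cast (fun x => if x = 0 then n else x.val) (fun _ _ => mem_univ _)
    (fun x _ => ?_) (fun j hj => ?_) (fun x _ => ?_) fun _ _ => rfl
  · have := NeZero.pos n
    have := x.val_lt
    have := (val_eq_zero x).not.2
    split_ifs with hx
    · simp only [mem_Icc]; omega
    · simp only [mem_Icc]; have := this hx; omega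
  · rw [mem_Icc] at hj
    rcases hj.2.lt_or_eq with hlt | rfl
    · rw [if_neg fun h => Nat.not_dvd_of_pos_of_lt hj.1 hlt ((natCast_eq_zero_iff j n).1 h),
        val_cast_of_lt hlt]
    · simp
  · split_ifs with hx
    · rw [hx, natCast_self]
    · exact natCast_zmod_val x

theorem natCast_mul_natCast_div_eq_zero {n p j : ℕ} (hpn : p ∣ n) (hpj : p ∣ j) :
    (j : ZMod n) * ((n / p : ℕ) : ZMod n) = 0 := by
  rw [← Nat.cast_mul, natCast_eq_zero_iff]
  calc n = p * (n / p) := (Nat.mul_div_cancel' hpn).symm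
    _ ∣ j * (n / p) := mul_dvd_mul_right hpj _

theorem sum_ite_natCast_div_ne_zero {n : ℕ} [NeZero n] (s : Finset ℕ) {t : Finset ℕ}
    (ht : t ⊆ n.primeFactors) (ht₀ : t.Nonempty) :
    ∑ p ∈ t, (if p ∈ s then ((n / p : ℕ) : ZMod n) else -((n / p : ℕ) : ZMod n)) ≠ 0 := by
  set c : ℕ → ℤ := fun p => if p ∈ s then 1 else -1
  have hc : ∑ p ∈ t, (if p ∈ s then ((n / p : ℕ) : ZMod n) else -((n / p : ℕ) : ZMod n)) =
      ((∑ p ∈ t, c p * (n / p : ℕ) : ℤ) : ZMod n) := by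
    rw [Int.cast_sum]
    refine sum_congr rfl fun p _ => ?_
    simp only [c]
    split_ifs
    · rw [one_mul, Int.cast_natCast]
    · rw [neg_one_mul, Int.cast_neg, Int.cast_natCast]
  rw [hc, Ne, intCast_zmod_eq_zero_iff_dvd]
  exact Int.not_dvd_sum_mul_div_primeFactors (NeZero.ne n) ht ht₀ fun p _ => by
    simp only [c]
    split_ifs <;> simp

end ZMod

theorem ramanujanSum_eq_sum_stdAddChar (n : ℕ) [NeZero n] (r : ℤ) :
    ramanujanSum n r =
      ∑ j ∈ Icc 1 n with j.Coprime n, ZMod.stdAddChar ((j : ZMod n) * (r : ZMod n)) := by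
  rw [ramanujanSum, sum_filter]
  refine sum_congr rfl fun j _ => ?_
  rw [← Int.cast_natCast (R := ZMod n), ← Int.cast_mul, ZMod.stdAddChar_coe]
  push_cast
  ring_nf

theorem ramanujanSum_zero (n : ℕ) : ramanujanSum n 0 = n.totient := by
  simp only [ramanujanSum, Int.cast_zero, mul_zero, zero_div, Complex.exp_zero]
  rw [sum_boole, ← Nat.filter_coprime_Ico_eq_totient n 1, add_comm, Ico_add_one_right_eq_Icc]
  exact congrArg _ (congrArg _ (filter_congr fun _ _ => Nat.coprime_comm))

theorem moebius_mul_sum_divisors_moebius_mul_ramanujanSum {n d₁ : ℕ} [NeZero n] (hd₁ : d₁ ∣ n)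
    (hsq : Squarefree d₁) :
    (μ d₁ : ℂ) * ∑ d ∈ n.divisors, (μ d : ℂ) *
        ramanujanSum n (∑ p ∈ d₁.primeFactors, ((n / p : ℕ) : ℤ) -
          ∑ p ∈ d.primeFactors, ((n / p : ℕ) : ℤ)) = n := by
  set ψ : AddChar (ZMod n) ℂ := ZMod.stdAddChar
  set w : ℕ → ZMod n := fun p =>
    if p ∈ d₁.primeFactors then ((n / p : ℕ) : ZMod n) else -((n / p : ℕ) : ZMod n)
  have hfactor (x : ZMod n) : (μ d₁ : ℂ) * ∑ d ∈ n.divisors, (μ d : ℂ) *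
      ψ (x * ((∑ p ∈ d₁.primeFactors, ((n / p : ℕ) : ℤ) -
        ∑ p ∈ d.primeFactors, ((n / p : ℕ) : ℤ) : ℤ) : ZMod n)) =
      ∏ p ∈ n.primeFactors, (1 - ψ (x * w p)) := by
    convert ψ.moebius_mul_sum_divisors_moebius_mul_map_sub (NeZero.ne n) hd₁ hsq
      (fun p => x * ((n / p : ℕ) : ZMod n)) using 4 with d _ p _
    · rw [Int.cast_sub, Int.cast_sum, Int.cast_sum, mul_sub, mul_sum, mul_sum]
      simp only [Int.cast_natCast]
    · simp only [w, mul_ite, mul_neg]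
  have hvanish (j : ℕ) (hj : ¬ j.Coprime n) : ∏ p ∈ n.primeFactors, (1 - ψ (j * w p)) = 0 := by
    obtain ⟨p, hp, hpj, hpn⟩ := Nat.Prime.not_coprime_iff_dvd.1 hj
    refine prod_eq_zero (Nat.mem_primeFactors.2 ⟨hp, hpn, NeZero.ne n⟩) ?_
    simp [w, mul_ite, mul_neg, ZMod.natCast_mul_natCast_div_eq_zero hpn hpj]
  calc _ = ∑ j ∈ Icc 1 n with j.Coprime n, ∏ p ∈ n.primeFactors, (1 - ψ (j * w p)) := by
        simp_rw [ramanujanSum_eq_sum_stdAddChar, mul_sum]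
        rw [sum_comm]
        exact sum_congr rfl fun j _ => by rw [← hfactor, mul_sum]
    _ = ∑ j ∈ Icc 1 n, ∏ p ∈ n.primeFactors, (1 - ψ (j * w p)) :=
        sum_filter_of_ne fun j _ hne => not_not.1 (mt (hvanish j) hne)
    _ = ∑ x : ZMod n, ∏ p ∈ n.primeFactors, (1 - ψ (x * w p)) :=
        ZMod.sum_Icc_one_natCast n fun x => ∏ p ∈ n.primeFactors, (1 - ψ (x * w p))
    _ = n := by
        rw [AddChar.sum_prod_one_sub_map_mul (ZMod.isPrimitive_stdAddChar n) _ _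
          fun t ht ht₀ => ZMod.sum_ite_natCast_div_ne_zero _ ht ht₀, ZMod.card]

theorem ramanujan_identity (n : ℕ) (hn : 1 ≤ n) (d₁ : ℕ)
    (hd₁ : d₁ ∣ ∏ p ∈ n.primeFactors, p) :
    (ArithmeticFunction.moebius d₁ : ℂ) *
        ∑ d ∈ n.divisors.erase d₁, (ArithmeticFunction.moebius d : ℂ) *
          ramanujanSum n
            ((∑ p ∈ d₁.primeFactors, ((n / p : ℕ) : ℤ)) -
              ∑ p ∈ d.primeFactors, ((n / p : ℕ) : ℤ)) =
      (n : ℂ) - (n.totient : ℂ) := by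
  have : NeZero n := ⟨by omega⟩
  have hsq : Squarefree d₁ := (Nat.squarefree_prod_primeFactors n).squarefree_of_dvd hd₁
  have hd₁n : d₁ ∣ n := hd₁.trans (Nat.prod_primeFactors_dvd n)
  rw [sum_erase_eq_sub (Nat.mem_divisors.2 ⟨hd₁n, NeZero.ne n⟩), mul_sub,
    moebius_mul_sum_divisors_moebius_mul_ramanujanSum hd₁n hsq, sub_self, ramanujanSum_zero,
    ← mul_assoc, ← Int.cast_mul, ← sq, moebius_sq_eq_one_of_squarefree hsq, Int.cast_one, one_mul]
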